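/- If for every target input x* the prediction Y* is a deterministic injective function of Θ, then EPIG(x) = BALD(x). -/
import Mathlib


open scoped BigOperators

/-- Shannon entropy (natural log) of a probability vector on a finite type. -/
noncomputable def entropy {α : Type*} [Fintype α] (p : α → ℝ) : ℝ :=
  -∑ a, p a * Real.log (p a)

/-- Mutual information of a joint distribution on `α × β`. -/
noncomputable def mutualInfo {α β : Type*} [Fintype α] [Fintype β] (p : α → β → ℝ) : ℝ :=
  entropy (fun a => ∑ b, p a b) + entropy (fun b => ∑ a, p a b)
    - entropy (fun ab : α × β => p ab.1 ab.2)

/-- Conditional mutual information `I(A;B|C)` of a joint distribution on `α × β × γ`,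
defined as `H(A,C) + H(B,C) - H(A,B,C) - H(C)`. -/
noncomputable def condMutualInfo {α β γ : Type*} [Fintype α] [Fintype β] [Fintype γ]
    (p : α → β → γ → ℝ) : ℝ :=
  entropy (fun ac : α × γ => ∑ b, p ac.1 b ac.2)
    + entropy (fun bc : β × γ => ∑ a, p a bc.1 bc.2)
    - entropy (fun abc : α × β × γ => p abc.1 abc.2.1 abc.2.2)
    - entropy (fun c => ∑ a, ∑ b, p a b c)

lemma sum_reindex_inj {Θ Ys : Type*} [Fintype Θ] [Fintype Ys] [DecidableEq Ys]
    (f : Θ → Ys) (hf : Function.Injective f) (g : Θ → ℝ) (φ : ℝ → ℝ) (hφ : φ 0 = 0) :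
    ∑ ys, φ (∑ θ, g θ * (if ys = f θ then 1 else 0)) = ∑ θ, φ (g θ) := by
  have himg : ∑ ys ∈ Finset.univ.image f, φ (∑ θ, g θ * (if ys = f θ then 1 else 0))
      = ∑ θ, φ (g θ) := by
    rw [Finset.sum_image (fun a _ b _ h => hf h)]
    apply Finset.sum_congr rfl
    intro θ _
    congr 1
    rw [Finset.sum_eq_single θ]
    · simp
    · intro θ' _ hne
      have : f θ ≠ f θ' := fun h => hne (hf h.symm)
      simp [this]
    · simp
  rw [← himg]
  symm
  apply Finset.sum_subset (Finset.subset_univ _)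
  intro ys _ hys
  have hz : (∑ θ, g θ * (if ys = f θ then 1 else 0)) = 0 := by
    apply Finset.sum_eq_zero
    intro θ _
    have : ys ≠ f θ := fun h => hys (Finset.mem_image.mpr ⟨θ, Finset.mem_univ _, h.symm⟩)
    simp [this]
  rw [hz, hφ]

/-- If for every target input `x*` the prediction `Y*` is a deterministic injective
function of `Θ`, then `EPIG(x) = BALD(x)`. -/
theorem stmt_13 {Θ Y Ys Xs : Type*} [Fintype Θ] [Fintype Y] [Fintype Ys] [Fintype Xs]
    [DecidableEq Ys]
    (w : Θ → ℝ) (pY : Θ → Y → ℝ) (pYs : Xs → Θ → Ys → ℝ) (r : Xs → ℝ)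
    (f : Xs → Θ → Ys)
    (hw0 : ∀ θ, 0 ≤ w θ) (hw1 : ∑ θ, w θ = 1)
    (hY0 : ∀ θ y, 0 ≤ pY θ y) (hY1 : ∀ θ, ∑ y, pY θ y = 1)
    (hf : ∀ xs, Function.Injective (f xs))
    (hdet : ∀ xs θ ys, pYs xs θ ys = if ys = f xs θ then 1 else 0)
    (hr0 : ∀ xs, 0 ≤ r xs) (hr1 : ∑ xs, r xs = 1) :
    ∑ xs, r xs * mutualInfo (fun y ys => ∑ θ, w θ * pY θ y * pYs xs θ ys)
      = mutualInfo (fun y θ => w θ * pY θ y) := by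
  have hterm : ∀ xs, mutualInfo (fun y ys => ∑ θ, w θ * pY θ y * pYs xs θ ys)
      = mutualInfo (fun y θ => w θ * pY θ y) := by
    intro xs
    have h1 : entropy (fun y : Y => ∑ ys, ∑ θ, w θ * pY θ y * pYs xs θ ys)
        = entropy (fun y : Y => ∑ θ, w θ * pY θ y) := by
      congr 1
      funext y
      rw [Finset.sum_comm]
      apply Finset.sum_congr rfl
      intro θ _
      simp [hdet, mul_ite, mul_one, mul_zero]
    have h2 : entropy (fun ys : Ys => ∑ y, ∑ θ, w θ * pY θ y * pYs xs θ ys)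
        = entropy (fun θ : Θ => ∑ y, w θ * pY θ y) := by
      have hv : ∀ ys : Ys, (∑ y, ∑ θ, w θ * pY θ y * pYs xs θ ys)
          = ∑ θ, (∑ y, w θ * pY θ y) * (if ys = f xs θ then 1 else 0) := by
        intro ys
        rw [Finset.sum_comm]
        apply Finset.sum_congr rfl
        intro θ _
        rw [Finset.sum_mul]
        apply Finset.sum_congr rfl
        intro y _
        rw [hdet]
      unfold entropy
      congr 1
      simp_rw [hv]
      exact sum_reindex_inj (f xs) (hf xs) (fun θ => ∑ y, w θ * pY θ y)
        (fun t => t * Real.log t) (by simp)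
    have h3 : entropy (fun ab : Y × Ys => ∑ θ, w θ * pY θ ab.1 * pYs xs θ ab.2)
        = entropy (fun ab : Y × Θ => w ab.2 * pY ab.2 ab.1) := by
      unfold entropy
      congr 1
      rw [Fintype.sum_prod_type, Fintype.sum_prod_type]
      apply Finset.sum_congr rfl
      intro y _
      have hv : ∀ ys : Ys, (∑ θ, w θ * pY θ y * pYs xs θ ys)
          = ∑ θ, (w θ * pY θ y) * (if ys = f xs θ then 1 else 0) := by
        intro ys
        apply Finset.sum_congr rfl
        intro θ _
        rw [hdet]
      simp_rw [hv]
      exact sum_reindex_inj (f xs) (hf xs) (fun θ => w θ * pY θ y)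
        (fun t => t * Real.log t) (by simp)
    unfold mutualInfo
    rw [h1, h2, h3]
  calc ∑ xs, r xs * mutualInfo (fun y ys => ∑ θ, w θ * pY θ y * pYs xs θ ys)
      = ∑ xs, r xs * mutualInfo (fun y θ => w θ * pY θ y) := by
        exact Finset.sum_congr rfl fun xs _ => by rw [hterm]
    _ = (∑ xs, r xs) * mutualInfo (fun y θ => w θ * pY θ y) := by
        rw [Finset.sum_mul]
    _ = mutualInfo (fun y θ => w θ * pY θ y) := by rw [hr1, one_mul]
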